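/- arXiv:2302.12570 — 2 statements merged into one kernel-verified Lean document; each statement's English description precedes it below -/
import Mathlib

section
/- Let (X_t)_{t∈ℕ} be a random process over ℝ adapted to a filtration (F_t)_{t∈ℕ} with X₀ ≤ 0. Let b > 0 and let T = inf{t ∈ ℕ | X_t ≥ b}. Suppose there are constants a ≤ 0, c ∈ (0,b), and ε < 0 such that for all t ∈ ℕ: (i) E[(X_{t+1} − X_t)·1_{X_t ≥ a}·1_{T > t} | F_t] ≤ ε·1_{X_t ≥ a}·1_{T > t}; (ii) |X_{t+1} − X_t|·1_{X_t ≥ a}·1_{T > t} < c·1_{X_t ≥ a} + 1_{X_t < a}; and (iii) X_{t+1}·1_{X_t < a}·1_{T > t} ≤ 0. Then for all t ∈ ℕ, Pr[T ≤ t] ≤ t²·exp(−b·|ε|/(2c²)). -/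
open MeasureTheory
open scoped ENNReal

attribute [local instance] Classical.propDecidable

/-!
Put `λ = |ε| / (2c²)`. A drift below `-c` is impossible with steps shorter than `c`, so if
`ε < -c` the drift region `{X_t ≥ a, T > t}` is null; otherwise `λc ≤ 1`, hence
`exp (λΔ) ≤ 1 + λΔ + λ²c²` for a step `Δ`, and the drift bound `ε` absorbs the quadratic term.
Either way `exp (λ X_t)` does not increase in expectation while the process stays in the drift
region. A jump from below `a` lands in `(-∞, 0]`, so on `{T ≤ t}` there are times `s < u ≤ t`
with `X_s ≤ 0`, `X_u ≥ b` and the process in the drift region during `[s, u)`. By Markov's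
inequality each such excursion has probability at most `exp (-λb)`, and there are at most `t²`
pairs `(s, u)`.
-/

open Real

theorem integral_mul_le_of_condExp_le {Ω : Type*} {m m0 : MeasurableSpace Ω} {μ : Measure Ω}
    (hm : m ≤ m0) [SigmaFinite (μ.trim hm)] {f g h : Ω → ℝ}
    (hg : StronglyMeasurable[m] g) (hg0 : 0 ≤ g) (hf : Integrable f μ)
    (hgf : Integrable (g * f) μ) (hgh : Integrable (g * h) μ) (hfh : μ[f | m] ≤ᵐ[μ] h) :
    ∫ ω, (g * f) ω ∂μ ≤ ∫ ω, (g * h) ω ∂μ := by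
  have hpull := condExp_mul_of_stronglyMeasurable_left hg hgf hf
  calc ∫ ω, (g * f) ω ∂μ = ∫ ω, (g * μ[f | m]) ω ∂μ := by
        rw [← integral_condExp hm]
        exact integral_congr_ae hpull
    _ ≤ ∫ ω, (g * h) ω ∂μ := by
        refine integral_mono_ae (integrable_condExp.congr hpull) hgh ?_
        filter_upwards [hfh] with ω hω using mul_le_mul_of_nonneg_left hω (hg0 ω)

theorem Real.exp_mul_le_of_abs_sub_le {l c y z : ℝ} (hl : 0 ≤ l) (hlc : l * c ≤ 1)
    (hzy : |z - y| ≤ c) :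
    exp (l * z) ≤ exp (l * y) * (1 + l ^ 2 * c ^ 2 + l * (z - y)) := by
  have hx : |l * (z - y)| ≤ 1 := by
    rw [abs_mul, abs_of_nonneg hl]
    exact (mul_le_mul_of_nonneg_left hzy hl).trans hlc
  have hquad := (abs_le.1 (abs_exp_sub_one_sub_id_le hx)).2
  have hsq : (l * (z - y)) ^ 2 ≤ l ^ 2 * c ^ 2 := by
    rw [mul_pow, ← sq_abs (z - y)]
    gcongr
  calc exp (l * z) = exp (l * y) * exp (l * (z - y)) := by rw [← exp_add]; ring_nf
    _ ≤ exp (l * y) * (1 + l ^ 2 * c ^ 2 + l * (z - y)) := by gcongr; linarith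

theorem integrableOn_exp_mul_of_abs_sub_le {Ω : Type*} [MeasurableSpace Ω] {μ : Measure Ω}
    {Y Z : Ω → ℝ} {S : Set Ω} {c l : ℝ} (hZ : Measurable Z) (hl : 0 ≤ l) (hS : MeasurableSet S)
    (hstep : ∀ᵐ ω ∂μ, ω ∈ S → |Z ω - Y ω| ≤ c)
    (hint : IntegrableOn (fun ω => exp (l * Y ω)) S μ) :
    IntegrableOn (fun ω => exp (l * Z ω)) S μ := by
  refine (hint.mul_const (exp (l * c))).mono'
    (measurable_exp.comp (hZ.const_mul l)).aestronglyMeasurable ?_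
  filter_upwards [(ae_restrict_iff' hS).2 hstep] with ω hω
  rw [norm_of_nonneg (exp_pos _).le, ← exp_add, exp_le_exp]
  nlinarith [(abs_le.1 hω).2]

section OneStep

variable {Ω : Type*} {m m0 : MeasurableSpace Ω} {μ : Measure Ω} [IsFiniteMeasure μ]
  {Y Z : Ω → ℝ} {A S : Set Ω} {c ε : ℝ}

theorem integrableOn_sub_of_abs_sub_le (hm : m ≤ m0) (hY : Measurable[m] Y)
    (hZ : Measurable Z) (hstep : ∀ᵐ ω ∂μ, ω ∈ S → |Z ω - Y ω| ≤ c) (hS : MeasurableSet S) :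
    IntegrableOn (Z - Y) S μ := by
  refine Integrable.of_bound (hZ.sub (hY.mono hm le_rfl)).aestronglyMeasurable c ?_
  filter_upwards [(ae_restrict_iff' hS).2 hstep] with ω hω using hω

theorem setIntegral_mul_sub_le_of_condExp_le (hm : m ≤ m0) (hY : Measurable[m] Y)
    (hZ : Measurable Z) (hA : MeasurableSet A) (hS : MeasurableSet[m] S) (hSA : S ⊆ A)
    (hstep : ∀ᵐ ω ∂μ, ω ∈ A → |Z ω - Y ω| ≤ c)
    (hdrift : μ[A.indicator (Z - Y) | m] ≤ᵐ[μ] A.indicator fun _ => ε)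
    {w : Ω → ℝ} (hw : Measurable[m] w) (hw0 : 0 ≤ w) (hwS : IntegrableOn w S μ) :
    ∫ ω in S, w ω * (Z ω - Y ω) ∂μ ≤ ε * ∫ ω in S, w ω ∂μ := by
  have hS0 : MeasurableSet S := hm _ hS
  have hstepS : ∀ᵐ ω ∂μ.restrict S, ‖Z ω - Y ω‖ ≤ c :=
    (ae_restrict_iff' hS0).2 (hstep.mono fun ω h hωS => h (hSA hωS))
  have hwf : S.indicator w * A.indicator (Z - Y) = S.indicator fun ω => w ω * (Z ω - Y ω) := by
    ext ω
    by_cases hω : ω ∈ S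
    · simp [hω, hSA hω]
    · simp [hω]
  have hwε : S.indicator w * (A.indicator fun _ => ε) = S.indicator fun ω => w ω * ε := by
    ext ω
    by_cases hω : ω ∈ S
    · simp [hω, hSA hω]
    · simp [hω]
  have key := integral_mul_le_of_condExp_le hm (hw.indicator hS).stronglyMeasurable
    (Set.indicator_nonneg fun ω _ => hw0 ω)
    ((integrableOn_sub_of_abs_sub_le hm hY hZ hstep hA).integrable_indicator hA)
    (hwf ▸ IntegrableOn.integrable_indicator
      (hwS.mul_bdd (hZ.sub (hY.mono hm le_rfl)).aestronglyMeasurable hstepS) hS0)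
    (hwε ▸ IntegrableOn.integrable_indicator (hwS.mul_const ε) hS0) hdrift
  rw [hwf, hwε] at key
  simp only [integral_indicator hS0, integral_mul_const] at key
  linarith

theorem measure_eq_zero_of_drift_lt_neg (hm : m ≤ m0) (hY : Measurable[m] Y)
    (hZ : Measurable Z) (hA : MeasurableSet[m] A) (hstep : ∀ᵐ ω ∂μ, ω ∈ A → |Z ω - Y ω| ≤ c)
    (hdrift : μ[A.indicator (Z - Y) | m] ≤ᵐ[μ] A.indicator fun _ => ε) (hεc : ε < -c) :
    μ A = 0 := by
  have hA0 : MeasurableSet A := hm _ hA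
  have hupper := setIntegral_mul_sub_le_of_condExp_le hm hY hZ hA0 hA subset_rfl hstep hdrift
    measurable_const (fun _ => zero_le_one) (integrableOn_const (by finiteness))
  have hlower : ∫ _ in A, -c ∂μ ≤ ∫ ω in A, (Z ω - Y ω) ∂μ :=
    setIntegral_mono_on_ae (integrableOn_const (by finiteness))
      (integrableOn_sub_of_abs_sub_le hm hY hZ hstep hA0) hA0
      (hstep.mono fun ω h hω => neg_le_of_abs_le (h hω))
  simp only [one_mul, setIntegral_const, smul_eq_mul, mul_one] at hupper hlower
  have hreal : μ.real A = 0 := by nlinarith [measureReal_nonneg (μ := μ) (s := A)]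
  exact (measureReal_eq_zero_iff).1 hreal

theorem setIntegral_exp_mul_le_of_drift (hm : m ≤ m0) (hc : 0 < c)
    (hY : Measurable[m] Y) (hZ : Measurable Z) (hA : MeasurableSet[m] A)
    (hS : MeasurableSet[m] S) (hSA : S ⊆ A) (hstep : ∀ᵐ ω ∂μ, ω ∈ A → |Z ω - Y ω| ≤ c)
    (hdrift : μ[A.indicator (Z - Y) | m] ≤ᵐ[μ] A.indicator fun _ => ε)
    {l : ℝ} (hl : 0 ≤ l) (hlε : l * c ^ 2 ≤ -ε) (hint : IntegrableOn (fun ω => exp (l * Y ω)) S μ) :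
    ∫ ω in S, exp (l * Z ω) ∂μ ≤ ∫ ω in S, exp (l * Y ω) ∂μ := by
  rcases lt_or_ge ε (-c) with hεc | hεc
  · have hnull : μ.restrict S = 0 :=
      Measure.restrict_eq_zero.2 (measure_mono_null hSA
        (measure_eq_zero_of_drift_lt_neg hm hY hZ hA hstep hdrift hεc))
    simp [hnull]
  have hS0 : MeasurableSet S := hm _ hS
  have hlc : l * c ≤ 1 := by nlinarith
  have hYm : Measurable Y := hY.mono hm le_rfl
  have hexpY : Measurable[m] fun ω => exp (l * Y ω) := measurable_exp.comp (hY.const_mul l)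
  have hcross : IntegrableOn (fun ω => exp (l * Y ω) * (Z ω - Y ω)) S μ :=
    hint.mul_bdd (hZ.sub hYm).aestronglyMeasurable
      ((ae_restrict_iff' hS0).2 (hstep.mono fun ω h hωS => h (hSA hωS)))
  have hdriftI := setIntegral_mul_sub_le_of_condExp_le hm hY hZ (hm _ hA) hS hSA hstep hdrift
    hexpY (fun _ => (exp_pos _).le) hint
  set I := ∫ ω in S, exp (l * Y ω) ∂μ
  have hI : 0 ≤ I := setIntegral_nonneg hS0 fun _ _ => (exp_pos _).le
  calc ∫ ω in S, exp (l * Z ω) ∂μ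
      ≤ ∫ ω in S, (exp (l * Y ω) * (1 + l ^ 2 * c ^ 2) + l * (exp (l * Y ω) * (Z ω - Y ω))) ∂μ := by
        refine integral_mono_of_nonneg (ae_of_all _ fun _ => (exp_pos _).le)
          ((hint.mul_const _).add (hcross.const_mul l)) ((ae_restrict_iff' hS0).2 ?_)
        filter_upwards [hstep] with ω h hωS
        have := exp_mul_le_of_abs_sub_le hl hlc (h (hSA hωS))
        linarith
    _ = I * (1 + l ^ 2 * c ^ 2) + l * ∫ ω in S, exp (l * Y ω) * (Z ω - Y ω) ∂μ := by
        rw [integral_add (hint.mul_const _) (hcross.const_mul l), integral_mul_const,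
          integral_const_mul]
    _ ≤ I := by
        nlinarith [mul_le_mul_of_nonneg_left hdriftI hl,
          mul_nonneg (mul_nonneg hl hI) (sub_nonneg.2 hlε)]

end OneStep

def excursionSet {Ω : Type*} (X : ℕ → Ω → ℝ) (A : ℕ → Set Ω) (s u : ℕ) : Set Ω :=
  {ω | X s ω ≤ 0} ∩ ⋂ r ∈ Finset.Ico s u, A r

section Excursion

variable {Ω : Type*} {m0 : MeasurableSpace Ω} {μ : Measure Ω} {F : Filtration ℕ m0}
  {X : ℕ → Ω → ℝ} {A : ℕ → Set Ω} {c ε l : ℝ} {s u : ℕ}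

theorem excursionSet_self : excursionSet X A s s = {ω | X s ω ≤ 0} := by
  simp [excursionSet]

theorem excursionSet_succ (h : s ≤ u) :
    excursionSet X A s (u + 1) = excursionSet X A s u ∩ A u := by
  rw [excursionSet, excursionSet, Nat.Ico_succ_right_eq_insert_Ico h, Finset.set_biInter_insert,
    Set.inter_left_comm, Set.inter_comm (A u), Set.inter_assoc]

theorem measurableSet_excursionSet (hX : Adapted F X) (hA : ∀ r, MeasurableSet[F r] (A r))
    (h : s ≤ u) : MeasurableSet[F u] (excursionSet X A s u) :=
  (F.mono h _ (measurableSet_le (hX s) measurable_const)).inter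
    (Finset.measurableSet_biInter _ fun r hr => F.mono (Finset.mem_Ico.1 hr).2.le _ (hA r))

variable [IsProbabilityMeasure μ]

theorem setIntegral_exp_excursionSet_le_one (hX : Adapted F X)
    (hA : ∀ r, MeasurableSet[F r] (A r)) (hc : 0 < c)
    (hstep : ∀ r, ∀ᵐ ω ∂μ, ω ∈ A r → |X (r + 1) ω - X r ω| ≤ c)
    (hdrift : ∀ r, μ[(A r).indicator (X (r + 1) - X r) | F r] ≤ᵐ[μ] (A r).indicator fun _ => ε)
    (hl : 0 ≤ l) (hlε : l * c ^ 2 ≤ -ε) (hsu : s ≤ u) :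
    IntegrableOn (fun ω => exp (l * X u ω)) (excursionSet X A s u) μ ∧
      ∫ ω in excursionSet X A s u, exp (l * X u ω) ∂μ ≤ 1 := by
  have hXm : ∀ r, Measurable (X r) := fun r => (hX r).mono (F.le r) le_rfl
  induction u, hsu using Nat.le_induction with
  | base =>
    have hS := F.le s _ (measurableSet_excursionSet hX hA le_rfl)
    have hle : ∀ ω ∈ excursionSet X A s s, exp (l * X s ω) ≤ 1 := fun ω hω => by
      rw [excursionSet_self] at hω
      exact exp_le_one_iff.2 (mul_nonpos_of_nonneg_of_nonpos hl hω)
    have hint : IntegrableOn (fun ω => exp (l * X s ω)) (excursionSet X A s s) μ :=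
      Integrable.of_bound (measurable_exp.comp ((hXm s).const_mul l)).aestronglyMeasurable 1
        ((ae_restrict_iff' hS).2 (ae_of_all _ fun ω hω => by
          rw [norm_of_nonneg (exp_pos _).le]
          exact hle ω hω))
    refine ⟨hint, ?_⟩
    calc ∫ ω in excursionSet X A s s, exp (l * X s ω) ∂μ ≤ ∫ _ in excursionSet X A s s, 1 ∂μ :=
          setIntegral_mono_on hint (integrableOn_const (by finiteness)) hS hle
      _ ≤ 1 := by simp
  | succ u hsu ih =>
    rw [excursionSet_succ hsu]
    have hSF := (measurableSet_excursionSet hX hA hsu).inter (hA u)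
    have hS := F.le u _ hSF
    have hint : IntegrableOn (fun ω => exp (l * X u ω)) (excursionSet X A s u ∩ A u) μ :=
      ih.1.mono_set Set.inter_subset_left
    refine ⟨integrableOn_exp_mul_of_abs_sub_le (hXm (u + 1)) hl hS
      ((hstep u).mono fun ω h hω => h hω.2) hint, ?_⟩
    calc ∫ ω in excursionSet X A s u ∩ A u, exp (l * X (u + 1) ω) ∂μ
        ≤ ∫ ω in excursionSet X A s u ∩ A u, exp (l * X u ω) ∂μ :=
          setIntegral_exp_mul_le_of_drift (F.le u) hc (hX u) (hXm (u + 1)) (hA u) hSF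
            Set.inter_subset_right (hstep u) (hdrift u) hl hlε hint
      _ ≤ ∫ ω in excursionSet X A s u, exp (l * X u ω) ∂μ :=
          setIntegral_mono_set ih.1 (ae_of_all _ fun _ => (exp_pos _).le)
            Set.inter_subset_left.eventuallyLE
      _ ≤ 1 := ih.2

theorem measureReal_excursionSet_inter_le (hX : Adapted F X)
    (hA : ∀ r, MeasurableSet[F r] (A r)) (hc : 0 < c)
    (hstep : ∀ r, ∀ᵐ ω ∂μ, ω ∈ A r → |X (r + 1) ω - X r ω| ≤ c)
    (hdrift : ∀ r, μ[(A r).indicator (X (r + 1) - X r) | F r] ≤ᵐ[μ] (A r).indicator fun _ => ε)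
    (hl : 0 ≤ l) (hlε : l * c ^ 2 ≤ -ε) (hsu : s ≤ u) (b : ℝ) :
    μ.real (excursionSet X A s u ∩ {ω | b ≤ X u ω}) ≤ exp (-(l * b)) := by
  obtain ⟨hint, hle⟩ := setIntegral_exp_excursionSet_le_one hX hA hc hstep hdrift hl hlε hsu
  have hE := F.le u _ (measurableSet_excursionSet hX hA hsu)
  have hEb : MeasurableSet (excursionSet X A s u ∩ {ω | b ≤ X u ω}) :=
    hE.inter (measurableSet_le measurable_const ((hX u).mono (F.le u) le_rfl))
  have hmarkov : exp (l * b) * μ.real (excursionSet X A s u ∩ {ω | b ≤ X u ω}) ≤ 1 :=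
    calc exp (l * b) * μ.real (excursionSet X A s u ∩ {ω | b ≤ X u ω})
        = ∫ _ in excursionSet X A s u ∩ {ω | b ≤ X u ω}, exp (l * b) ∂μ := by
          rw [setIntegral_const, smul_eq_mul, mul_comm]
      _ ≤ ∫ ω in excursionSet X A s u ∩ {ω | b ≤ X u ω}, exp (l * X u ω) ∂μ :=
          setIntegral_mono_on (integrableOn_const (by finiteness))
            (hint.mono_set Set.inter_subset_left) hEb
            fun ω hω => exp_le_exp.2 (mul_le_mul_of_nonneg_left hω.2 hl)
      _ ≤ ∫ ω in excursionSet X A s u, exp (l * X u ω) ∂μ :=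
          setIntegral_mono_set hint (ae_of_all _ fun _ => (exp_pos _).le)
            Set.inter_subset_left.eventuallyLE
      _ ≤ 1 := hle
  rw [exp_neg, ← one_div, le_div_iff₀ (exp_pos _)]
  linarith

end Excursion

theorem measureReal_biUnion_Icc_range_le {Ω : Type*} [MeasurableSpace Ω] {μ : Measure Ω}
    [IsFiniteMeasure μ] {B : ℕ → ℕ → Set Ω} {δ : ℝ} (hδ : 0 ≤ δ)
    (hB : ∀ s u, s < u → μ.real (B s u) ≤ δ) (t : ℕ) :
    μ.real (⋃ u ∈ Finset.Icc 1 t, ⋃ s ∈ Finset.range u, B s u) ≤ t ^ 2 * δ := by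
  calc μ.real (⋃ u ∈ Finset.Icc 1 t, ⋃ s ∈ Finset.range u, B s u)
      ≤ ∑ u ∈ Finset.Icc 1 t, ∑ s ∈ Finset.range u, μ.real (B s u) :=
        (measureReal_biUnion_finset_le _ _).trans
          (Finset.sum_le_sum fun _ _ => measureReal_biUnion_finset_le _ _)
    _ ≤ ∑ _u ∈ Finset.Icc 1 t, t * δ := by
        refine Finset.sum_le_sum fun u hu => ?_
        calc ∑ s ∈ Finset.range u, μ.real (B s u) ≤ ∑ _s ∈ Finset.range u, δ :=
              Finset.sum_le_sum fun s hs => hB s u (Finset.mem_range.1 hs)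
          _ ≤ t * δ := by
              rw [Finset.sum_const, Finset.card_range, nsmul_eq_mul]
              gcongr
              exact_mod_cast (Finset.mem_Icc.1 hu).2
    _ = t ^ 2 * δ := by simp; ring

theorem hittingAfter_zero_eq_sInf {Ω β : Type*} (u : ℕ → Ω → β) (s : Set β) (ω : Ω) :
    hittingAfter u s 0 ω = sInf {t : ℕ∞ | ∃ t' : ℕ, t = t' ∧ u t' ω ∈ s} := by
  refine le_antisymm (le_sInf ?_) ?_
  · rintro _ ⟨t', rfl, h⟩
    exact hittingAfter_le_of_mem (Nat.zero_le t') h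
  · rcases eq_or_ne (hittingAfter u s 0 ω) ⊤ with h | h
    · exact h ▸ le_top
    · have hmem := hittingAfter_mem_set_of_ne_top h
      lift hittingAfter u s 0 ω to ℕ using h with n hn
      exact sInf_le ⟨n, rfl, hmem⟩

theorem exists_excursion_start {x : ℕ → ℝ} {a : ℝ} {u : ℕ} (h0 : x 0 ≤ 0) (hu : 0 < x u)
    (hjump : ∀ r < u, x r < a → x (r + 1) ≤ 0) :
    ∃ s < u, x s ≤ 0 ∧ ∀ r ∈ Finset.Ico s u, a ≤ x r := by
  have hs : x (Nat.findGreatest (fun r => x r ≤ 0) u) ≤ 0 :=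
    Nat.findGreatest_spec (P := fun r => x r ≤ 0) (Nat.zero_le u) h0
  have hsu : Nat.findGreatest (fun r => x r ≤ 0) u < u :=
    (Nat.findGreatest_le u).lt_of_ne fun h => by rw [h] at hs; linarith
  refine ⟨_, hsu, hs, fun r hr => ?_⟩
  obtain ⟨hsr, hru⟩ := Finset.mem_Ico.1 hr
  by_contra! hra
  have := Nat.le_findGreatest (P := fun r => x r ≤ 0) (show r + 1 ≤ u by omega)
    (hjump r hru hra)
  omega

def driftRegion {Ω : Type*} (X : ℕ → Ω → ℝ) (T : Ω → ℕ∞) (a : ℝ) (r : ℕ) : Set Ω :=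
  {ω | a ≤ X r ω ∧ (r : ℕ∞) < T ω}

section DriftRegion

variable {Ω : Type*} {X : ℕ → Ω → ℝ} {T : Ω → ℕ∞} {a : ℝ} {r : ℕ}

theorem indicator_driftRegion (f : Ω → ℝ) :
    (driftRegion X T a r).indicator f =
      fun ω => f ω * (if a ≤ X r ω then 1 else 0) * (if (r : ℕ∞) < T ω then 1 else 0) := by
  ext ω
  by_cases h1 : a ≤ X r ω <;> by_cases h2 : (r : ℕ∞) < T ω <;>
    simp [driftRegion, h1, h2]

theorem measurableSet_driftRegion {m0 : MeasurableSpace Ω} {F : Filtration ℕ m0}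
    (hX : Adapted F X) (hT : IsStoppingTime F T) : MeasurableSet[F r] (driftRegion X T a r) :=
  (measurableSet_le measurable_const (hX r)).inter (hT.measurableSet_gt r)

theorem exists_excursionSet_of_hittingAfter_le {b : ℝ} {ω : Ω} {t : ℕ} (hb : 0 < b)
    (h0 : X 0 ω ≤ 0)
    (hjump : ∀ r, X r ω < a → (r : ℕ∞) < hittingAfter X (Set.Ici b) 0 ω → X (r + 1) ω ≤ 0)
    (ht : hittingAfter X (Set.Ici b) 0 ω ≤ t) :
    ∃ u ∈ Finset.Icc 1 t, ∃ s ∈ Finset.range u,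
      ω ∈ excursionSet X (driftRegion X (hittingAfter X (Set.Ici b) 0) a) s u ∩
        {ω | b ≤ X u ω} := by
  obtain ⟨u, hu⟩ := ENat.ne_top_iff_exists.1 (ne_top_of_le_ne_top (ENat.natCast_ne_top t) ht)
  have hbu : b ≤ X u ω := by
    have hmem := hittingAfter_mem_set_of_ne_top (hu ▸ ENat.natCast_ne_top u)
    rwa [← hu] at hmem
  have hlt : ∀ r < u, (r : ℕ∞) < hittingAfter X (Set.Ici b) 0 ω := fun r hr =>
    hu ▸ Nat.cast_lt.2 hr
  obtain ⟨s, hsu, hs0, hsa⟩ :=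
    exists_excursion_start h0 (hb.trans_le hbu) fun r hr hra => hjump r hra (hlt r hr)
  refine ⟨u, Finset.mem_Icc.2 ⟨by omega, Nat.cast_le.1 (hu ▸ ht)⟩, s, Finset.mem_range.2 hsu,
    ⟨hs0, ?_⟩, hbu⟩
  simp only [Set.mem_iInter]
  exact fun r hr => ⟨hsa r hr, hlt r (Finset.mem_Ico.1 hr).2⟩

theorem measure_hittingAfter_le_le_of_excursion {m0 : MeasurableSpace Ω} {μ : Measure Ω}
    [IsFiniteMeasure μ] {b δ : ℝ} (hb : 0 < b) (hX0 : ∀ᵐ ω ∂μ, X 0 ω ≤ 0)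
    (hjump : ∀ᵐ ω ∂μ, ∀ r, X r ω < a → (r : ℕ∞) < hittingAfter X (Set.Ici b) 0 ω →
      X (r + 1) ω ≤ 0)
    (hδ : 0 ≤ δ) (hexc : ∀ s u, s < u →
      μ.real (excursionSet X (driftRegion X (hittingAfter X (Set.Ici b) 0) a) s u ∩
        {ω | b ≤ X u ω}) ≤ δ) (t : ℕ) :
    μ {ω | hittingAfter X (Set.Ici b) 0 ω ≤ t} ≤ ENNReal.ofReal (t ^ 2 * δ) := by
  have hcover : {ω | hittingAfter X (Set.Ici b) 0 ω ≤ t} ≤ᵐ[μ]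
      ⋃ u ∈ Finset.Icc 1 t, ⋃ s ∈ Finset.range u,
        excursionSet X (driftRegion X (hittingAfter X (Set.Ici b) 0) a) s u ∩ {ω | b ≤ X u ω} := by
    filter_upwards [hX0, hjump] with ω h0 hj (ht : _ ≤ _)
    obtain ⟨u, hu, s, hs, hω⟩ := exists_excursionSet_of_hittingAfter_le hb h0 hj ht
    exact Set.mem_iUnion₂.2 ⟨u, hu, Set.mem_iUnion₂.2 ⟨s, hs, hω⟩⟩
  refine (measure_mono_ae hcover).trans ?_
  rw [← ofReal_measureReal (measure_ne_top μ _)]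
  exact ENNReal.ofReal_le_ofReal
    (measureReal_biUnion_Icc_range_le hδ hexc t)

end DriftRegion

theorem negative_drift_theorem_general {Ω : Type*} [m0 : MeasurableSpace Ω]
    (μ : Measure Ω) [IsProbabilityMeasure μ]
    (F : Filtration ℕ m0) (X : ℕ → Ω → ℝ) (hadapted : Adapted F X)
    (hX0 : ∀ᵐ ω ∂μ, X 0 ω ≤ 0)
    (b : ℝ) (hb : 0 < b)
    (T : Ω → ℕ∞)
    (hT : ∀ ω, T ω = sInf {t : ℕ∞ | ∃ t' : ℕ, t = (t' : ℕ∞) ∧ b ≤ X t' ω})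
    (a : ℝ) (c : ℝ) (hc0 : 0 < c)
    (ε : ℝ) (hε : ε < 0)
    (h1 : ∀ t : ℕ, ∀ᵐ ω ∂μ,
      (μ[fun ω' => (X (t + 1) ω' - X t ω') *
          (if a ≤ X t ω' then 1 else 0) * (if (t : ℕ∞) < T ω' then 1 else 0) | F t]) ω ≤
        ε * (if a ≤ X t ω then 1 else 0) * (if (t : ℕ∞) < T ω then 1 else 0))
    (h2 : ∀ t : ℕ, ∀ᵐ ω ∂μ,
      |X (t + 1) ω - X t ω| *
          (if a ≤ X t ω then 1 else 0) * (if (t : ℕ∞) < T ω then 1 else 0) <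
        c * (if a ≤ X t ω then 1 else 0) + (if X t ω < a then 1 else 0))
    (h3 : ∀ t : ℕ, ∀ᵐ ω ∂μ,
      X (t + 1) ω * (if X t ω < a then 1 else 0) * (if (t : ℕ∞) < T ω then 1 else 0) ≤ 0) :
    ∀ t : ℕ, μ {ω | T ω ≤ (t : ℕ∞)} ≤
      ENNReal.ofReal ((t : ℝ) ^ 2 * Real.exp (-(b * |ε|) / (2 * c ^ 2))) := by
  intro t
  set A := driftRegion X T a
  have hstep : ∀ r, ∀ᵐ ω ∂μ, ω ∈ A r → |X (r + 1) ω - X r ω| ≤ c := fun r => by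
    filter_upwards [h2 r] with ω h hω
    simp only [if_pos hω.1, if_pos hω.2, if_neg (not_lt.2 hω.1)] at h
    linarith
  have hdrift : ∀ r, μ[(A r).indicator (X (r + 1) - X r) | F r] ≤ᵐ[μ] (A r).indicator fun _ => ε :=
    fun r => by
      filter_upwards [h1 r] with ω hω
      simpa only [A, indicator_driftRegion, Pi.sub_apply] using hω
  have hjump : ∀ᵐ ω ∂μ, ∀ r, X r ω < a → (r : ℕ∞) < T ω → X (r + 1) ω ≤ 0 := by
    filter_upwards [ae_all_iff.2 h3] with ω h r hra hrT
    simpa [hra, hrT] using h r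
  obtain rfl : T = hittingAfter X (Set.Ici b) 0 :=
    funext fun ω => (hT ω).trans (hittingAfter_zero_eq_sInf X _ ω).symm
  have hA : ∀ r, MeasurableSet[F r] (A r) := fun r =>
    measurableSet_driftRegion hadapted (hadapted.isStoppingTime_hittingAfter measurableSet_Ici)
  have hlε : |ε| / (2 * c ^ 2) * c ^ 2 ≤ -ε := by
    rw [abs_of_neg hε]
    field_simp
    linarith
  rw [show -(b * |ε|) / (2 * c ^ 2) = -(|ε| / (2 * c ^ 2) * b) by ring]
  exact measure_hittingAfter_le_le_of_excursion hb hX0 hjump (Real.exp_pos _).le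
    (fun s u hsu => measureReal_excursionSet_inter_le hadapted hA hc0 hstep hdrift
      (by positivity) hlε hsu.le b) t

/-- negative-drift theorem (Theorem 2, Corollary 3.24 of Krejca): if the
process `(X_t)` adapted to `(F_t)` starts at `X₀ ≤ 0`, has drift at most `ε < 0` on
`{X_t ≥ a} ∩ {T > t}`, step size less than `c` there, and cannot jump above `0` from below
`a` before time `T`, then the hitting time `T` of `[b, ∞)` satisfies
`Pr[T ≤ t] ≤ t² exp(-b|ε|/(2c²))` for all `t`. -/
theorem negative_drift_theorem {Ω : Type*} [m0 : MeasurableSpace Ω]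
    (μ : Measure Ω) [IsProbabilityMeasure μ]
    (F : Filtration ℕ m0) (X : ℕ → Ω → ℝ) (hadapted : Adapted F X)
    (hX0 : ∀ᵐ ω ∂μ, X 0 ω ≤ 0)
    (b : ℝ) (hb : 0 < b)
    (T : Ω → ℕ∞)
    (hT : ∀ ω, T ω = sInf {t : ℕ∞ | ∃ t' : ℕ, t = (t' : ℕ∞) ∧ b ≤ X t' ω})
    (a : ℝ) (ha : a ≤ 0) (c : ℝ) (hc0 : 0 < c) (hcb : c < b)
    (ε : ℝ) (hε : ε < 0)
    (h1 : ∀ t : ℕ, ∀ᵐ ω ∂μ,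
      (μ[fun ω' => (X (t + 1) ω' - X t ω') *
          (if a ≤ X t ω' then 1 else 0) * (if (t : ℕ∞) < T ω' then 1 else 0) | F t]) ω ≤
        ε * (if a ≤ X t ω then 1 else 0) * (if (t : ℕ∞) < T ω then 1 else 0))
    (h2 : ∀ t : ℕ, ∀ᵐ ω ∂μ,
      |X (t + 1) ω - X t ω| *
          (if a ≤ X t ω then 1 else 0) * (if (t : ℕ∞) < T ω then 1 else 0) <
        c * (if a ≤ X t ω then 1 else 0) + (if X t ω < a then 1 else 0))
    (h3 : ∀ t : ℕ, ∀ᵐ ω ∂μ,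
      X (t + 1) ω * (if X t ω < a then 1 else 0) * (if (t : ℕ∞) < T ω then 1 else 0) ≤ 0) :
    ∀ t : ℕ, μ {ω | T ω ≤ (t : ℕ∞)} ≤
      ENNReal.ofReal ((t : ℝ) ^ 2 * Real.exp (-(b * |ε|) / (2 * c ^ 2))) :=
  negative_drift_theorem_general (m0 := m0) μ F X hadapted hX0 b hb T hT a c hc0 ε hε h1 h2 h3
end

section
/- Let n ≥ 1, let k ∈ [1..n−1], let χ be a real number with 0 < χ < n, and let x, w ∈ {0,1}^n with |x|₁ = |w|₁ = n − k and Hamming distance of x and w equal to 2. Then the probability that uniform crossover of x and w, followed independently by standard bit mutation with rate χ/n, produces a string z with |z|₁ = n − k and z ≠ w is at least (1/4)·(1 − χ/n)^n·(1 + χ). -/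
/-!
Since `|x|₁ = |w|₁`, the strings differ at some `i` with `xᵢ = 1` and some `j` with `xⱼ = 0`.
Crossover returns each of `x`, `u = x` with bit `j` flipped and `v = x` with bit `i` flipped with
probability `1/4`. With `p = χ/n`, mutation lands on the plateau away from `w` if it flips nothing
in `x` (probability `(1-p)^n`), one of the `|x|₁` ones of `u` other than bit `i`, or one of the
`n - |x|₁` zeros of `v` other than bit `j` (the untouched bit `i`, resp. `j`, still separates the
result from `w`). These are `n` single-bit flips of probability `p(1-p)^(n-1)` each, and as
`np = χ` and `(1-p)^(n-1) ≥ (1-p)^n` the total is at least `(1/4)(1-p)^n(1+χ)`.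
-/

open scoped ENNReal

namespace GA

attribute [local instance] Classical.propDecidable

/-- Bit strings of length `n`. -/
abbrev BitString (n : ℕ) := Fin n → Bool

/-- The number of ones in a bit string. -/
def oneCount {n : ℕ} (x : BitString n) : ℕ := (Finset.univ.filter fun i => x i = true).card

/-- The all-ones string, the unique global optimum of `jump`. -/
def allOnes (n : ℕ) : BitString n := fun _ => true

/-- The Hamming distance of two bit strings. -/
def hamming {n : ℕ} (x y : BitString n) : ℕ := (Finset.univ.filter fun i => x i ≠ y i).card

/-- The jump function with gap size `k`. -/
def jump (n k : ℕ) (x : BitString n) : ℕ :=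
  if oneCount x = n ∨ oneCount x ≤ n - k then k + oneCount x else n - oneCount x

/-- Interpret a real number as a probability in `ℝ≥0∞` (clamped to `[0,1]`). -/
noncomputable def toProb (p : ℝ) : ℝ≥0∞ := min (ENNReal.ofReal p) 1

lemma toProb_le_one (p : ℝ) : toProb p ≤ 1 := min_le_right _ _

/-- The product of independent distributions on the bits, as a distribution on bit strings. -/
noncomputable def pmfPi {n : ℕ} (p : Fin n → PMF Bool) : PMF (BitString n) :=
  PMF.ofFintype (fun z => ∏ i, p i (z i)) (by
    have h1 : ∀ i : Fin n, ∑ b : Bool, p i b = 1 := fun i => by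
      rw [← tsum_fintype (L := .unconditional _)]; exact (p i).tsum_coe
    calc ∑ z : BitString n, ∏ i, p i (z i)
        = ∑ z ∈ Fintype.piFinset (fun _ : Fin n => (Finset.univ : Finset Bool)),
            ∏ i, p i (z i) := by rw [Fintype.piFinset_univ]
      _ = ∏ i, ∑ b : Bool, p i b := (Finset.prod_univ_sum _ _).symm
      _ = 1 := Finset.prod_eq_one fun i _ => h1 i)

/-- The distribution of one bit after flipping `a` with probability `p`. -/
noncomputable def bitFlip (p : ℝ≥0∞) (hp : p ≤ 1) (a : Bool) : PMF Bool :=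
  PMF.ofFintype (fun b => if b = a then 1 - p else p) (by
    rw [Fintype.sum_bool]
    cases a
    · rw [if_neg (fun h => Bool.noConfusion h), if_pos rfl]
      exact add_tsub_cancel_of_le hp
    · rw [if_pos rfl, if_neg (fun h => Bool.noConfusion h)]
      exact tsub_add_cancel_of_le hp)

/-- Standard bit mutation with mutation rate `p`: every bit of `x` is flipped independently
with probability `p`. -/
noncomputable def mutate {n : ℕ} (p : ℝ≥0∞) (hp : p ≤ 1) (x : BitString n) : PMF (BitString n) :=
  pmfPi fun i => bitFlip p hp (x i)

/-- One bit of a uniform crossover. -/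
noncomputable def crossBit (a b : Bool) : PMF Bool :=
  if a = b then PMF.pure a else PMF.uniformOfFintype Bool

/-- Uniform crossover of `x` and `y`: every bit is chosen uniformly at random from the
corresponding bits of the two parents, independently across positions. -/
noncomputable def crossover {n : ℕ} (x y : BitString n) : PMF (BitString n) :=
  pmfPi fun i => crossBit (x i) (y i)

/-- Uniform crossover of `x` and `y` followed (independently) by standard bit mutation
with rate `p`. -/
noncomputable def crossMut {n : ℕ} (p : ℝ≥0∞) (hp : p ≤ 1) (x y : BitString n) :
    PMF (BitString n) :=
  (crossover x y).bind (mutate p hp)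

/-- The probability of an event under a discrete distribution. -/
noncomputable def prEvent {α : Type*} (p : PMF α) (E : α → Prop) : ℝ≥0∞ :=
  ∑' a, if E a then p a else 0

/-- Conditional probability `Pr[E | A]`. -/
noncomputable def condPr {α : Type*} (p : PMF α) (E A : α → Prop) : ℝ≥0∞ :=
  prEvent p (fun a => E a ∧ A a) / prEvent p A

/-- The minimal fitness value in a nonempty population. -/
noncomputable def minFit {n : ℕ} (f : BitString n → ℕ) (Q : Multiset (BitString n))
    (hQ : Q ≠ 0) : ℕ :=
  (Q.map f).toFinset.min' (by
    rw [Multiset.toFinset_nonempty]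
    simpa [Multiset.map_eq_zero] using hQ)

lemma filter_minFit_ne {n : ℕ} (f : BitString n → ℕ) (Q : Multiset (BitString n)) (hQ : Q ≠ 0) :
    Q.filter (fun a => f a = minFit f Q hQ) ≠ 0 := by
  have hmem : minFit f Q hQ ∈ (Q.map f).toFinset := Finset.min'_mem _ _
  rw [Multiset.mem_toFinset, Multiset.mem_map] at hmem
  obtain ⟨a, haQ, hfa⟩ := hmem
  intro h0
  have hin : a ∈ Q.filter (fun a => f a = minFit f Q hQ) :=
    Multiset.mem_filter.mpr ⟨haQ, hfa⟩
  rw [h0] at hin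
  exact absurd hin (Multiset.notMem_zero a)

/-- Remove an individual with lowest `f`-value from `Q`, breaking ties uniformly at random. -/
noncomputable def removeWorst {n : ℕ} (f : BitString n → ℕ) (Q : Multiset (BitString n))
    (hQ : Q ≠ 0) : PMF (Multiset (BitString n)) :=
  (PMF.ofMultiset (Q.filter (fun a => f a = minFit f Q hQ)) (filter_minFit_ne f Q hQ)).map
    (fun ℓ => Q.erase ℓ)

/-- The complete random outcome of one iteration of the `(μ+1)` GA: whether crossover was
used, the selected parent(s), the offspring, and the next population. -/
structure IterOutcome (n : ℕ) where
  cross : Bool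
  par1 : BitString n
  par2 : BitString n
  off : BitString n
  newPop : Multiset (BitString n)

/-- The Bernoulli distribution with an `ℝ≥0∞` parameter, as `PMF.bernoulli` was defined in
older Mathlib. -/
noncomputable def PMF.bernoulliENNReal (p : ℝ≥0∞) (h : p ≤ 1) : PMF Bool :=
  PMF.ofFintype (fun b => cond b p (1 - p)) (by simp [h])

/-- One iteration of the `(μ+1)` GA with crossover rate `pc` and mutation rate `pm`,
maximizing `f`, started from population `P`: with probability `pc` two parents are chosen
uniformly at random with replacement and an offspring is created by uniform crossover followed
by standard bit mutation; otherwise a uniformly random individual is mutated. Afterwards an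
individual of lowest fitness among `P` plus the offspring is removed, ties broken uniformly. -/
noncomputable def iterPMF (n : ℕ) (f : BitString n → ℕ) (pc pm : ℝ)
    (P : Multiset (BitString n)) : PMF (IterOutcome n) :=
  if hP : P ≠ 0 then
    ((PMF.bernoulliENNReal (toProb pc) (toProb_le_one pc)).bind fun doCross =>
      if doCross then
        (PMF.ofMultiset P hP).bind fun x =>
          (PMF.ofMultiset P hP).bind fun y =>
            (crossMut (toProb pm) (toProb_le_one pm) x y).map fun z =>
              ((true, x, y, z) : Bool × BitString n × BitString n × BitString n)
      else
        (PMF.ofMultiset P hP).bind fun x =>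
          (mutate (toProb pm) (toProb_le_one pm) x).map fun z => (false, x, x, z)).bind fun r =>
      (removeWorst f (r.2.2.2 ::ₘ P) (Multiset.cons_ne_zero)).map fun P' =>
        ⟨r.1, r.2.1, r.2.2.1, r.2.2.2, P'⟩
  else PMF.pure ⟨false, fun _ => false, fun _ => false, fun _ => false, P⟩

/-- A multiset of `m` independent samples from `p`. -/
noncomputable def iidMultiset {α : Type*} (p : PMF α) : ℕ → PMF (Multiset α)
  | 0 => PMF.pure 0
  | m + 1 => (iidMultiset p m).bind fun s => p.map fun a => a ::ₘ s

/-- The initial population of the `(μ+1)` GA: `μ` independent uniform samples. -/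
noncomputable def initPop (n μ : ℕ) : PMF (Multiset (BitString n)) :=
  iidMultiset (PMF.uniformOfFintype (BitString n)) μ

/-- State of the run of the GA on `jump n k`: current population together with a flag
recording whether the global optimum has been evaluated so far. -/
noncomputable def gaStepFlag (n k : ℕ) (pc pm : ℝ) :
    Multiset (BitString n) × Bool → PMF (Multiset (BitString n) × Bool) := fun s =>
  (iterPMF n (jump n k) pc pm s.1).map fun o => (o.newPop, s.2 || decide (o.off = allOnes n))

/-- One step of the GA on `jump n k`, tracking only the population. -/
noncomputable def gaStepPop (n k : ℕ) (pc pm : ℝ) :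
    Multiset (BitString n) → PMF (Multiset (BitString n)) := fun P =>
  (iterPMF n (jump n k) pc pm P).map fun o => o.newPop

/-- The initial state of the GA on `jump n k` (population plus flag whether the optimum
was evaluated during initialization). -/
noncomputable def initState (n μ : ℕ) : PMF (Multiset (BitString n) × Bool) :=
  (initPop n μ).map fun P => (P, decide (allOnes n ∈ P))

/-- `survive step G t s` is the probability that a Markov chain with transition kernel `step`
started in `s` does not visit the set `G` during the first `t` steps (including time 0),
i.e. `Pr[T > t]` for the hitting time `T` of `G`. -/
noncomputable def survive {S : Type*} (step : S → PMF S) (G : S → Prop) : ℕ → S → ℝ≥0∞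
  | 0, s => if G s then 0 else 1
  | t + 1, s => if G s then 0 else ∑' s', step s s' * survive step G t s'

/-- `Pr[T ≤ t]` for the hitting time `T` of `G` of the Markov chain `step` started in `s`. -/
noncomputable def prHitBy {S : Type*} (step : S → PMF S) (G : S → Prop) (t : ℕ) (s : S) :
    ℝ≥0∞ :=
  1 - survive step G t s

/-- The expected hitting time `E[T]`, `T = inf {t | X_t ∈ G}`, of a Markov chain with
transition kernel `step` and initial distribution `ρ`, computed as `∑_t Pr[T > t]`. -/
noncomputable def expectedHitting {S : Type*} (step : S → PMF S) (G : S → Prop) (ρ : PMF S) :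
    ℝ≥0∞ :=
  ∑' t : ℕ, ∑' s, ρ s * survive step G t s

/-- The expected runtime (number of fitness evaluations until the global optimum is evaluated
for the first time) of the `(μ+1)` GA on `jump n k`: the `μ` initial evaluations plus the
expected number of iterations until the optimum is evaluated. -/
noncomputable def expectedRuntime (n k μ : ℕ) (pc pm : ℝ) : ℝ≥0∞ :=
  μ + expectedHitting (gaStepFlag n k pc pm) (fun s => s.2 = true) (initState n μ)

/-- The expected number of iterations of the `(μ+1)` GA on `jump n k` until the optimum is
evaluated or the entire population is on the plateau. -/
noncomputable def expectedTimePlateau (n k μ : ℕ) (pc pm : ℝ) : ℝ≥0∞ :=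
  expectedHitting (gaStepFlag n k pc pm)
    (fun s => s.2 = true ∨ ∀ x ∈ s.1, oneCount x = n - k) (initState n μ)

variable {n : ℕ}

lemma prEvent_eq_toOuterMeasure {α : Type*} (p : PMF α) (E : α → Prop) :
    prEvent p E = p.toOuterMeasure {a | E a} := by
  simp only [prEvent, PMF.toOuterMeasure_apply, Set.indicator_apply, Set.mem_ofPred_eq]

lemma prEvent_bind {α β : Type*} (p : PMF α) (f : α → PMF β) (E : β → Prop) :
    prEvent (p.bind f) E = ∑' a, p a * prEvent (f a) E := by
  simp only [prEvent_eq_toOuterMeasure, PMF.toOuterMeasure_bind_apply]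

lemma sum_le_prEvent {α : Type*} (p : PMF α) {E : α → Prop} (s : Finset α)
    (hs : ∀ a ∈ s, E a) : ∑ a ∈ s, p a ≤ prEvent p E := by
  rw [prEvent_eq_toOuterMeasure, ← PMF.toOuterMeasure_apply_finset]
  exact PMF.toOuterMeasure_mono p fun a ha => hs a ha.1

lemma oneCount_add_card_filter_false (y : BitString n) :
    oneCount y + (Finset.univ.filter fun t => y t = false).card = n := by
  simp only [oneCount, ← Bool.not_eq_true]
  rw [Finset.card_filter_add_card_filter_not, Finset.card_univ, Fintype.card_fin]

lemma hamming_eq_card_filter_add_card_filter (x w : BitString n) :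
    hamming x w = (Finset.univ.filter fun t => x t ≠ w t ∧ x t = true).card
      + (Finset.univ.filter fun t => x t ≠ w t ∧ w t = true).card := by
  simp only [hamming, Finset.card_filter, ← Finset.sum_add_distrib]
  refine Finset.sum_congr rfl fun t _ => ?_
  cases x t <;> cases w t <;> simp

lemma oneCount_add_card_filter_ne_and (x w : BitString n) :
    oneCount x + (Finset.univ.filter fun t => x t ≠ w t ∧ w t = true).card
      = oneCount w + (Finset.univ.filter fun t => x t ≠ w t ∧ x t = true).card := by
  simp only [oneCount, Finset.card_filter, ← Finset.sum_add_distrib]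
  refine Finset.sum_congr rfl fun t _ => ?_
  cases x t <;> cases w t <;> simp

lemma exists_swap_of_hamming_eq_two {x w : BitString n} (hcount : oneCount x = oneCount w)
    (hdist : hamming x w = 2) :
    ∃ i j, x i = true ∧ w i = false ∧ x j = false ∧ w j = true := by
  have hsum := hamming_eq_card_filter_add_card_filter x w
  have hbal := oneCount_add_card_filter_ne_and x w
  obtain ⟨i, hi⟩ := Finset.card_pos.mp (show 0 < (Finset.univ.filter
    fun t => x t ≠ w t ∧ x t = true).card by omega)
  obtain ⟨j, hj⟩ := Finset.card_pos.mp (show 0 < (Finset.univ.filter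
    fun t => x t ≠ w t ∧ w t = true).card by omega)
  simp only [Finset.mem_filter, Finset.mem_univ, true_and] at hi hj
  exact ⟨i, j, hi.2, by simpa [hi.2] using hi.1, by simpa [hj.2] using hj.1, hj.2⟩

def flipAt (y : BitString n) (b : Fin n) : BitString n := Function.update y b (!y b)

@[simp] lemma flipAt_apply_self (y : BitString n) (b : Fin n) : flipAt y b b = !y b :=
  Function.update_self _ _ _

lemma flipAt_apply_of_ne (y : BitString n) {b t : Fin n} (h : t ≠ b) : flipAt y b t = y t :=
  Function.update_of_ne h _ _

lemma flipAt_injective (y : BitString n) : Function.Injective (flipAt y) := by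
  intro b b' h
  by_contra hne
  have := congrFun h b
  rw [flipAt_apply_self, flipAt_apply_of_ne y hne] at this
  cases y b <;> simp at this

lemma flipAt_ne_self (y : BitString n) (b : Fin n) : flipAt y b ≠ y := fun h => by
  have := congrFun h b
  cases hb : y b <;> simp [hb] at this

lemma oneCount_flipAt_of_true {y : BitString n} {b : Fin n} (hb : y b = true) :
    oneCount (flipAt y b) + 1 = oneCount y := by
  have hset : Finset.univ.filter (fun t => flipAt y b t = true)
      = (Finset.univ.filter fun t => y t = true).erase b := by
    ext t
    rcases eq_or_ne t b with rfl | htb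
    · simp [hb]
    · simp [flipAt_apply_of_ne y htb, htb]
  rw [oneCount, oneCount, hset, Finset.card_erase_add_one (by simp [hb])]

lemma oneCount_flipAt_of_false {y : BitString n} {b : Fin n} (hb : y b = false) :
    oneCount (flipAt y b) = oneCount y + 1 := by
  have hset : Finset.univ.filter (fun t => flipAt y b t = true)
      = insert b (Finset.univ.filter fun t => y t = true) := by
    ext t
    rcases eq_or_ne t b with rfl | htb
    · simp [hb]
    · simp [flipAt_apply_of_ne y htb, htb]
  rw [oneCount, oneCount, hset, Finset.card_insert_of_notMem (by simp [hb])]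

section Mutation

variable (p : ℝ≥0∞) (hp : p ≤ 1)

lemma mutate_apply_self (y : BitString n) : mutate p hp y y = (1 - p) ^ n := by
  simp [mutate, pmfPi, bitFlip]

lemma mutate_apply_flipAt (y : BitString n) (b : Fin n) :
    mutate p hp y (flipAt y b) = p * (1 - p) ^ (n - 1) := by
  rw [mutate, pmfPi, PMF.ofFintype_apply, ← Finset.mul_prod_erase _ _ (Finset.mem_univ b)]
  congr 1
  · simp [bitFlip]
  · rw [Finset.prod_congr rfl fun t ht => ?_, Finset.prod_const,
      Finset.card_erase_of_mem (Finset.mem_univ b), Finset.card_univ, Fintype.card_fin]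
    simp [bitFlip, flipAt_apply_of_ne y (Finset.ne_of_mem_erase ht)]

lemma card_mul_le_prEvent_mutate {E : BitString n → Prop} (y : BitString n)
    (S : Finset (Fin n)) (hS : ∀ b ∈ S, E (flipAt y b)) :
    S.card * (p * (1 - p) ^ (n - 1)) ≤ prEvent (mutate p hp y) E := by
  calc S.card * (p * (1 - p) ^ (n - 1)) = ∑ z ∈ S.image (flipAt y), mutate p hp y z := by
        rw [Finset.sum_image fun b _ b' _ h => flipAt_injective y h]
        simp [mutate_apply_flipAt]
    _ ≤ prEvent (mutate p hp y) E :=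
        sum_le_prEvent _ _ fun z hz => by
          obtain ⟨b, hb, rfl⟩ := Finset.mem_image.mp hz
          exact hS b hb

end Mutation

lemma crossover_apply_of_agree {x w y : BitString n} (h : ∀ t, x t = w t → y t = x t) :
    crossover x w y = 2⁻¹ ^ hamming x w := by
  have hdiff : ∀ t ∈ Finset.univ.filter (fun t => x t ≠ w t),
      crossBit (x t) (w t) (y t) = 2⁻¹ := fun t ht => by
    simp [crossBit, (Finset.mem_filter.mp ht).2]
  have hagree : ∀ t ∈ Finset.univ.filter (fun t => ¬x t ≠ w t),
      crossBit (x t) (w t) (y t) = 1 := fun t ht => by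
    have hxw : x t = w t := not_not.mp (Finset.mem_filter.mp ht).2
    rw [crossBit, if_pos hxw, h t hxw, PMF.pure_apply, if_pos rfl]
  rw [crossover, pmfPi, PMF.ofFintype_apply,
    ← Finset.prod_filter_mul_prod_filter_not Finset.univ (fun t => x t ≠ w t),
    Finset.prod_congr rfl hdiff, Finset.prod_congr rfl hagree, Finset.prod_const,
    Finset.prod_const_one, mul_one, hamming]

section CrossMut

variable (p : ℝ≥0∞) (hp : p ≤ 1) {x w : BitString n} {i j : Fin n}

lemma oneCount_mul_le_prEvent_mutate_flipAt_zero (hij : i ≠ j) (hxi : x i = true)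
    (hwi : w i = false) (hxj : x j = false) :
    oneCount x * (p * (1 - p) ^ (n - 1)) ≤
      prEvent (mutate p hp (flipAt x j)) (fun z => oneCount z = oneCount x ∧ z ≠ w) := by
  have hcount := oneCount_flipAt_of_false hxj
  have hui : flipAt x j i = true := by rw [flipAt_apply_of_ne x hij, hxi]
  have hS : ((Finset.univ.filter fun t => flipAt x j t = true).erase i).card = oneCount x := by
    rw [Finset.card_erase_of_mem (by simp [hui])]
    exact (congrArg (· - 1) hcount).trans (Nat.add_sub_cancel _ _)
  rw [← hS]
  refine card_mul_le_prEvent_mutate p hp _ _ fun b hb => ?_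
  obtain ⟨hbi, hb⟩ := Finset.mem_erase.mp hb
  refine ⟨by have := oneCount_flipAt_of_true (Finset.mem_filter.mp hb).2; omega, fun h => ?_⟩
  have := congrFun h i
  rw [flipAt_apply_of_ne _ (Ne.symm hbi), hui, hwi] at this
  exact Bool.noConfusion this

lemma sub_oneCount_mul_le_prEvent_mutate_flipAt_one (hij : i ≠ j) (hxi : x i = true)
    (hxj : x j = false) (hwj : w j = true) :
    ((n - oneCount x : ℕ) : ℝ≥0∞) * (p * (1 - p) ^ (n - 1)) ≤
      prEvent (mutate p hp (flipAt x i)) (fun z => oneCount z = oneCount x ∧ z ≠ w) := by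
  have hcount := oneCount_flipAt_of_true hxi
  have hvj : flipAt x i j = false := by rw [flipAt_apply_of_ne x (Ne.symm hij), hxj]
  have hS : ((Finset.univ.filter fun t => flipAt x i t = false).erase j).card
      = n - oneCount x := by
    have := oneCount_add_card_filter_false (flipAt x i)
    rw [Finset.card_erase_of_mem (by simp [hvj])]
    omega
  rw [← hS]
  refine card_mul_le_prEvent_mutate p hp _ _ fun b hb => ?_
  obtain ⟨hbj, hb⟩ := Finset.mem_erase.mp hb
  refine ⟨by rw [oneCount_flipAt_of_false (Finset.mem_filter.mp hb).2]; omega, fun h => ?_⟩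
  have := congrFun h j
  rw [flipAt_apply_of_ne _ (Ne.symm hbj), hvj, hwj] at this
  exact Bool.noConfusion this

lemma le_prEvent_crossMut (hcount : oneCount x = oneCount w) (hdist : hamming x w = 2) :
    4⁻¹ * ((1 - p) ^ n + n * (p * (1 - p) ^ (n - 1))) ≤
      prEvent (crossMut p hp x w) (fun z => oneCount z = oneCount x ∧ z ≠ w) := by
  obtain ⟨i, j, hxi, hwi, hxj, hwj⟩ := exists_swap_of_hamming_eq_two hcount hdist
  have hij : i ≠ j := by rintro rfl; simp [hxi] at hxj
  set E := fun z => oneCount z = oneCount x ∧ z ≠ w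
  set g := fun y => crossover x w y * prEvent (mutate p hp y) E
  have hcross : ∀ y : BitString n, (∀ t, t ≠ i → t ≠ j → y t = x t) →
      crossover x w y = 4⁻¹ := fun y hy => by
    rw [crossover_apply_of_agree fun t ht => hy t (by rintro rfl; simp [hxi, hwi] at ht)
      (by rintro rfl; simp [hxj, hwj] at ht), hdist, ← ENNReal.inv_pow]
    norm_num
  have hxw : x ≠ w := fun h => by simp [h, hwi] at hxi
  have hmutx : (1 - p) ^ n ≤ prEvent (mutate p hp x) E := by
    simpa [mutate_apply_self] using sum_le_prEvent (mutate p hp x) {x} (by simpa [E] using hxw)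
  have hle : oneCount x ≤ n := by have := oneCount_add_card_filter_false x; omega
  calc 4⁻¹ * ((1 - p) ^ n + n * (p * (1 - p) ^ (n - 1)))
      = 4⁻¹ * (1 - p) ^ n + 4⁻¹ * (oneCount x * (p * (1 - p) ^ (n - 1)))
          + 4⁻¹ * ((n - oneCount x : ℕ) * (p * (1 - p) ^ (n - 1))) := by
        have hn : (n : ℝ≥0∞) = oneCount x + (n - oneCount x : ℕ) := by
          rw [← Nat.cast_add, Nat.add_sub_of_le hle]
        rw [hn]; ring
    _ ≤ g x + g (flipAt x j) + g (flipAt x i) := by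
        simp only [g]
        rw [hcross x fun _ _ _ => rfl, hcross _ fun t _ htj => flipAt_apply_of_ne x htj,
          hcross _ fun t hti _ => flipAt_apply_of_ne x hti]
        gcongr
        · exact oneCount_mul_le_prEvent_mutate_flipAt_zero p hp hij hxi hwi hxj
        · exact sub_oneCount_mul_le_prEvent_mutate_flipAt_one p hp hij hxi hxj hwj
    _ = ∑ y ∈ {x, flipAt x j, flipAt x i}, g y := by
        rw [Finset.sum_insert, Finset.sum_pair ((flipAt_injective x).ne hij.symm), add_assoc]
        simp [Ne.symm (flipAt_ne_self x _)]
    _ ≤ ∑' y, g y := ENNReal.sum_le_tsum _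
    _ = prEvent (crossMut p hp x w) E := (prEvent_bind _ _ _).symm

end CrossMut

lemma one_sub_pow_mul_one_add_le {r : ℝ} (hr0 : 0 ≤ r) (hr1 : r ≤ 1) (m : ℕ) :
    (1 - r) ^ m * (1 + m * r) ≤ (1 - r) ^ m + m * (r * (1 - r) ^ (m - 1)) := by
  have hpow : (1 - r) ^ m ≤ (1 - r) ^ (m - 1) :=
    pow_le_pow_of_le_one (by linarith) (by linarith) (Nat.sub_le m 1)
  calc (1 - r) ^ m * (1 + m * r) = (1 - r) ^ m + m * (r * (1 - r) ^ m) := by ring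
    _ ≤ (1 - r) ^ m + m * (r * (1 - r) ^ (m - 1)) := by gcongr

theorem crossover_with_parent_produces_non_w_general
    (n k : ℕ)
    (χ : ℝ) (hχ0 : 0 < χ) (hχn : χ < n)
    (x w : BitString n) (hx : oneCount x = n - k) (hw : oneCount w = n - k)
    (hdist : hamming x w = 2) :
    ENNReal.ofReal (1 / 4 * (1 - χ / n) ^ n * (1 + χ)) ≤
      prEvent (crossMut (toProb (χ / n)) (toProb_le_one (χ / n)) x w)
        (fun z => oneCount z = n - k ∧ z ≠ w) := by
  have hn : (0 : ℝ) < n := hχ0.trans hχn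
  set r := χ / n
  have hr0 : 0 ≤ r := by positivity
  have hr1 : r ≤ 1 := (div_le_one hn).mpr hχn.le
  have hχ : χ = n * r := (mul_div_cancel₀ χ hn.ne').symm
  have hp : toProb r = ENNReal.ofReal r := min_eq_left (ENNReal.ofReal_le_one.mpr hr1)
  have hbound := le_prEvent_crossMut (toProb r) (toProb_le_one r) (hx.trans hw.symm) hdist
  rw [hx] at hbound
  refine le_trans ?_ hbound
  calc ENNReal.ofReal (1 / 4 * (1 - r) ^ n * (1 + χ))
      ≤ ENNReal.ofReal (1 / 4 * ((1 - r) ^ n + n * (r * (1 - r) ^ (n - 1)))) := by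
        rw [hχ, mul_assoc]
        gcongr
        exact one_sub_pow_mul_one_add_le hr0 hr1 n
    _ = 4⁻¹ * ((1 - toProb r) ^ n + n * (toProb r * (1 - toProb r) ^ (n - 1))) := by
        have h1r : 0 ≤ 1 - r := sub_nonneg.mpr hr1
        rw [hp, ← ENNReal.ofReal_one, ← ENNReal.ofReal_sub _ hr0,
          ENNReal.ofReal_mul (by norm_num), ENNReal.ofReal_add (by positivity) (by positivity),
          ENNReal.ofReal_mul n.cast_nonneg, ENNReal.ofReal_mul hr0, ENNReal.ofReal_pow h1r,
          ENNReal.ofReal_pow h1r, ENNReal.ofReal_natCast, one_div,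
          ENNReal.ofReal_inv_of_pos (by norm_num)]
        norm_num

/-- for `x, w` on the plateau (with `n - k` ones) at Hamming distance `2`,
uniform crossover of `x` and `w` followed by standard bit mutation with rate `χ/n` produces
a string `z` on the plateau with `z ≠ w` with probability at least
`(1/4)(1 - χ/n)^n (1 + χ)`. -/
theorem crossover_with_parent_produces_non_w
    (n k : ℕ) (hn : 1 ≤ n) (hk1 : 1 ≤ k) (hk2 : k + 1 ≤ n)
    (χ : ℝ) (hχ0 : 0 < χ) (hχn : χ < n)
    (x w : BitString n) (hx : oneCount x = n - k) (hw : oneCount w = n - k)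
    (hdist : hamming x w = 2) :
    ENNReal.ofReal (1 / 4 * (1 - χ / n) ^ n * (1 + χ)) ≤
      prEvent (crossMut (toProb (χ / n)) (toProb_le_one (χ / n)) x w)
        (fun z => oneCount z = n - k ∧ z ≠ w) :=
  crossover_with_parent_produces_non_w_general n k χ hχ0 hχn x w hx hw hdist

end GA
end
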